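/- Let 𝔽 be one of ℂ, ℝ, ℚ and fix an integer q ≥ 0. There is a constant K depending only on q such that the following holds. Let 0 < ε ≤ 1 and let v₁,…,v_q ∈ 𝔽ⁿ be ε-independent vectors with ‖v_i‖∞ ≤ 1 for each i. Let 0 ≤ δ < ε/2 and let v ∈ 𝔽ⁿ be a vector with ‖v‖∞ ≤ 1. Then at least one of the following holds: (a) the vectors v₁,…,v_q, v are δ-independent, or (b) there is a vector v* in the linear span of v₁,…,v_q with ‖v − v*‖₁ ≤ K·ε^{−q}·δ·n. -/

import Mathlib

/-!
If `v₁,…,v_q, w` are `δ`-dependent, pick a dependent family `v'₁,…,v'_q, w'` within `δn` of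
them. Since `δn ≤ εn`, the `v'ᵢ` are still independent, so `w' = ∑ cᵢ v'ᵢ`. Every `|cₖ| ≤ 4/ε`:
otherwise replacing `v'ₖ` by `v'ₖ - cₖ⁻¹ w'` gives a dependent family within
`δn + (ε/4)(1+δ)n ≤ εn` of `v`. Then `w* = ∑ cᵢ vᵢ` is within `(1 + 4/ε) δn ≤ 4 ε^{-q} δn`
of `w`, using `q ≥ 1` whenever a coefficient exists.
-/

/-- Vectors `v₁,…,v_q ∈ 𝔽ⁿ` are `ε`-independent if there do not exist linearly dependent
vectors `v₁',…,v_q'` with `‖v₁−v₁'‖₁ + … + ‖v_q−v_q'‖₁ ≤ εn`. -/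
def EpsIndependent (𝔽 : Type*) [NormedField 𝔽] {q n : ℕ} (ε : ℝ)
    (v : Fin q → Fin n → 𝔽) : Prop :=
  ¬ ∃ v' : Fin q → Fin n → 𝔽, ¬ LinearIndependent 𝔽 v' ∧
      ∑ i, ∑ j, ‖v i j - v' i j‖ ≤ ε * n

def Statement18 (𝔽 : Type) [NormedField 𝔽] : Prop :=
  ∀ q : ℕ, ∃ K : ℝ,
    ∀ ε : ℝ, 0 < ε → ε ≤ 1 →
    ∀ (n : ℕ) (v : Fin q → Fin n → 𝔽),
      EpsIndependent 𝔽 ε v → (∀ i j, ‖v i j‖ ≤ 1) →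
      ∀ δ : ℝ, 0 ≤ δ → δ < ε / 2 →
      ∀ w : Fin n → 𝔽, (∀ j, ‖w j‖ ≤ 1) →
        -- (a) `v₁,…,v_q, w` are `δ`-independent, or
        EpsIndependent 𝔽 δ (Fin.snoc v w) ∨
        -- (b) some `w*` in the span of `v₁,…,v_q` has `‖w − w*‖₁ ≤ K·ε^{−q}·δ·n`
        ∃ wstar ∈ Submodule.span 𝔽 (Set.range v),
          ∑ j, ‖w j - wstar j‖ ≤ K * (ε ^ q)⁻¹ * δ * n

open Finset

section Algebra

variable {K M ι : Type*} [DivisionRing K] [AddCommGroup M] [Module K M] [Fintype ι]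
  [DecidableEq ι]

theorem not_linearIndependent_sub_single (v : ι → M) (c : ι → K) {k : ι} (hk : c k ≠ 0) :
    ¬ LinearIndependent K (v - Pi.single k ((c k)⁻¹ • ∑ i, c i • v i)) := by
  rw [Fintype.not_linearIndependent_iff]
  refine ⟨c, ?_, k, hk⟩
  simp [smul_sub, sum_sub_distrib, Pi.single_apply, smul_smul, hk]

end Algebra

section L1

variable {𝔽 ι σ : Type*} [NormedField 𝔽] [Fintype ι] [Fintype σ]

theorem sum_sum_norm_sub_sub_single_le [DecidableEq ι] (v v' : ι → σ → 𝔽) (k : ι)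
    (d : σ → 𝔽) :
    ∑ i, ∑ j, ‖v i j - (v' - Pi.single k d : ι → σ → 𝔽) i j‖ ≤
      ∑ i, ∑ j, ‖v i j - v' i j‖ + ∑ j, ‖d j‖ := by
  calc ∑ i, ∑ j, ‖v i j - (v' - Pi.single k d : ι → σ → 𝔽) i j‖
      ≤ ∑ i, (∑ j, ‖v i j - v' i j‖ + if i = k then ∑ j, ‖d j‖ else 0) := by
        gcongr with i _
        split_ifs with hik
        · subst hik
          rw [← sum_add_distrib]
          gcongr with j _
          simpa [sub_add] using norm_add_le (v i j - v' i j) (d j)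
        · simp [hik]
    _ = ∑ i, ∑ j, ‖v i j - v' i j‖ + ∑ j, ‖d j‖ := by
        simp [sum_add_distrib]

theorem sum_norm_sub_sum_smul_le (w : σ → 𝔽) (v v' : ι → σ → 𝔽) (c : ι → 𝔽) {C : ℝ}
    (hc : ∀ i, ‖c i‖ ≤ C) :
    ∑ j, ‖w j - (∑ i, c i • v i) j‖ ≤
      ∑ j, ‖w j - (∑ i, c i • v' i) j‖ + C * ∑ i, ∑ j, ‖v i j - v' i j‖ := by
  calc ∑ j, ‖w j - (∑ i, c i • v i) j‖
      ≤ ∑ j, (‖w j - (∑ i, c i • v' i) j‖ + ∑ i, ‖c i‖ * ‖v i j - v' i j‖) := by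
        gcongr with j _
        have h : w j - (∑ i, c i • v i) j =
            (w j - (∑ i, c i • v' i) j) + ∑ i, c i * (v' i j - v i j) := by
          simp [Finset.sum_apply, mul_sub, sum_sub_distrib]
        rw [h]
        refine (norm_add_le _ _).trans (add_le_add_right ((norm_sum_le _ _).trans ?_) _)
        simp [norm_sub_rev]
    _ ≤ ∑ j, (‖w j - (∑ i, c i • v' i) j‖ + ∑ i, C * ‖v i j - v' i j‖) := by
        gcongr with j _ i _
        exact hc i
    _ = ∑ j, ‖w j - (∑ i, c i • v' i) j‖ + C * ∑ i, ∑ j, ‖v i j - v' i j‖ := by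
        rw [sum_add_distrib, sum_comm, mul_sum]
        simp_rw [mul_sum]

end L1

namespace EpsIndependent

variable {𝔽 : Type*} [NormedField 𝔽] {q n : ℕ} {ε : ℝ} {v : Fin q → Fin n → 𝔽}

theorem linearIndependent_of_le (hv : EpsIndependent 𝔽 ε v) {v' : Fin q → Fin n → 𝔽}
    (hvv' : ∑ i, ∑ j, ‖v i j - v' i j‖ ≤ ε * n) : LinearIndependent 𝔽 v' :=
  not_not.1 fun h => hv ⟨v', h, hvv'⟩

/-- Replacing `v'ₖ` by `v'ₖ - cₖ⁻¹ • ∑ cᵢ v'ᵢ` makes the family dependent. -/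
theorem lt_sum_norm_sub_add (hv : EpsIndependent 𝔽 ε v) (v' : Fin q → Fin n → 𝔽)
    (c : Fin q → 𝔽) {k : Fin q} (hk : c k ≠ 0) :
    ε * n < ∑ i, ∑ j, ‖v i j - v' i j‖ + ‖c k‖⁻¹ * ∑ j, ‖(∑ i, c i • v' i) j‖ := by
  refine lt_of_not_ge fun hle => hv ⟨_, not_linearIndependent_sub_single v' c hk, ?_⟩
  refine (sum_sum_norm_sub_sub_single_le v v' k _).trans (le_of_eq_of_le ?_ hle)
  simp only [Pi.smul_apply, norm_smul, norm_inv, mul_sum]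

theorem norm_coeff_le (hv : EpsIndependent 𝔽 ε v) (hε : 0 < ε) (hε1 : ε ≤ 1) {δ : ℝ}
    (hδ : δ < ε / 2) {w : Fin n → 𝔽} (hw : ∀ j, ‖w j‖ ≤ 1) {v' : Fin q → Fin n → 𝔽}
    {c : Fin q → 𝔽}
    (hdist : ∑ i, ∑ j, ‖v i j - v' i j‖ + ∑ j, ‖w j - (∑ i, c i • v' i) j‖ ≤ δ * n)
    (k : Fin q) : ‖c k‖ ≤ 4 / ε := by
  set w' := ∑ i, c i • v' i
  by_contra! hck
  have hck0 : c k ≠ 0 := norm_pos_iff.1 ((div_pos four_pos hε).trans hck)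
  have hD : 0 ≤ ∑ i, ∑ j, ‖v i j - v' i j‖ := by positivity
  have hW : 0 ≤ ∑ j, ‖w j - w' j‖ := by positivity
  have hw' : ∑ j, ‖w' j‖ ≤ (1 + δ) * n := by
    calc ∑ j, ‖w' j‖ ≤ ∑ j, (1 + ‖w j - w' j‖) := by
          gcongr with j _
          linarith [norm_le_insert' (w' j) (w j), norm_sub_rev (w j) (w' j), hw j]
      _ ≤ (1 + δ) * n := by
          rw [sum_add_distrib, sum_const, card_univ, Fintype.card_fin, nsmul_one]
          linarith
  have hinv : ‖c k‖⁻¹ ≤ ε / 4 := by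
    simpa using inv_anti₀ (div_pos four_pos hε) hck.le
  have hmove : ‖c k‖⁻¹ * ∑ j, ‖w' j‖ ≤ ε / 4 * ((1 + δ) * n) :=
    mul_le_mul hinv hw' (by positivity) (by positivity)
  have hδ' : δ * (1 + ε / 4) * n ≤ 3 * ε / 4 * n := by gcongr; nlinarith
  linarith [hv.lt_sum_norm_sub_add v' c hck0]

end EpsIndependent

theorem statement18_normedField (𝔽 : Type) [NormedField 𝔽] : Statement18 𝔽 := by
  intro q
  refine ⟨4, fun ε hε hε1 n v hv _ δ _ hδ w hw => or_iff_not_imp_left.2 fun hvw => ?_⟩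
  obtain ⟨u, hu, hdist⟩ := not_not.1 hvw
  obtain ⟨v', w', rfl⟩ : ∃ v' w', u = Fin.snoc v' w' :=
    ⟨Fin.init u, u (Fin.last q), (Fin.snoc_init_self u).symm⟩
  simp only [Fin.sum_univ_castSucc, Fin.snoc_castSucc, Fin.snoc_last] at hdist
  have hW : 0 ≤ ∑ j, ‖w j - w' j‖ := by positivity
  have hv' : LinearIndependent 𝔽 v' :=
    hv.linearIndependent_of_le <| (le_of_add_le_of_nonneg_left hdist hW).trans <|
      mul_le_mul_of_nonneg_right (by linarith) n.cast_nonneg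
  obtain ⟨c, rfl⟩ := (Submodule.mem_span_range_iff_exists_fun 𝔽).1 <|
    not_not.1 fun h => hu (linearIndependent_finSnoc.2 ⟨hv', h⟩)
  have hc : ∀ i, ‖c i‖ ≤ 4 * (ε ^ q)⁻¹ := fun i =>
    (hv.norm_coeff_le hε hε1 hδ hw hdist i).trans <| by
      rw [div_eq_mul_inv]
      gcongr
      exact pow_le_of_le_one hε.le hε1 (Fin.pos i).ne'
  have hK : 1 ≤ 4 * (ε ^ q)⁻¹ := by
    linarith [(one_le_inv₀ (pow_pos hε q)).2 (pow_le_one₀ hε.le hε1)]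
  refine ⟨∑ i, c i • v i, Submodule.sum_mem _ fun i _ =>
    Submodule.smul_mem _ _ (Submodule.subset_span ⟨i, rfl⟩), ?_⟩
  calc ∑ j, ‖w j - (∑ i, c i • v i) j‖
      ≤ ∑ j, ‖w j - (∑ i, c i • v' i) j‖ + 4 * (ε ^ q)⁻¹ * ∑ i, ∑ j, ‖v i j - v' i j‖ :=
        sum_norm_sub_sum_smul_le w v v' c hc
    _ ≤ 4 * (ε ^ q)⁻¹ * (∑ i, ∑ j, ‖v i j - v' i j‖ + ∑ j, ‖w j - (∑ i, c i • v' i) j‖) := by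
        nlinarith
    _ ≤ 4 * (ε ^ q)⁻¹ * δ * n := by
        rw [mul_assoc _ δ]
        exact mul_le_mul_of_nonneg_left hdist (by positivity)

theorem statement18 : Statement18 ℂ ∧ Statement18 ℝ ∧ Statement18 ℚ :=
  ⟨statement18_normedField ℂ, statement18_normedField ℝ, statement18_normedField ℚ⟩
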